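/- Let k ≥ 1 and let α₁, …, α_k : ℝ → ℝ be twice differentiable functions. Suppose f : ℕ → ℝ → ℝ has twice differentiable initial values f₀, …, f_{k-1} and satisfies f_n(x) = Σ_{ℓ=1}^{k} α_ℓ(x) f_{n-ℓ}(x) for all n ≥ k and x ∈ ℝ. Write p_x(t) = t^k − Σ_{ℓ=1}^{k} α_ℓ(x) t^{k−ℓ}, and let b₀(x), …, b_{3k}(x) be the coefficients of its cube, p_x(t)³ = Σ_{i=0}^{3k} b_i(x) t^{3k−i} (so b₀ = 1). Then every f_n is twice differentiable, and the sequence of second derivatives satisfies Σ_{i=0}^{3k} b_i(x) · f″_{n−i}(x) = 0 for every n ≥ 3k and every x ∈ ℝ; in particular, the second derivatives satisfy a homogeneous linear recurrence of order at most 3k. -/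

import Mathlib

open Polynomial Finset


/-- Forward shift on two-sided sequences. -/
noncomputable def shiftE : Module.End ℝ (ℤ → ℝ) where
  toFun g m := g (m + 1)
  map_add' := by intros; rfl
  map_smul' := by intros; rfl

lemma shiftE_pow (a : ℕ) (g : ℤ → ℝ) (m : ℤ) : (shiftE ^ a) g m = g (m + a) := by
  induction a generalizing g m with
  | zero => simp
  | succ a ih =>
    rw [pow_succ, Module.End.mul_apply, ih]
    show g (m + a + 1) = _
    congr 1; push_cast; ring

lemma aeval_shiftE_apply (q : Polynomial ℝ) (g : ℤ → ℝ) (m : ℤ) :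
    (aeval shiftE q) g m = ∑ a ∈ Finset.range (q.natDegree + 1), q.coeff a * g (m + a) := by
  rw [Polynomial.aeval_eq_sum_range]
  simp [LinearMap.sum_apply, shiftE_pow]

lemma aeval_shiftE_apply' (q : Polynomial ℝ) {N : ℕ} (hN : q.natDegree ≤ N) (g : ℤ → ℝ)
    (m : ℤ) :
    (aeval shiftE q) g m = ∑ a ∈ Finset.range (N + 1), q.coeff a * g (m + a) := by
  rw [aeval_shiftE_apply]
  refine Finset.sum_subset (by intro a ha; simp_all; omega) ?_
  intro a _ ha
  have : q.natDegree < a := by simp at ha; omega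
  rw [Polynomial.coeff_eq_zero_of_natDegree_lt this, zero_mul]

lemma aeval_shiftE_agree (q : Polynomial ℝ) {g h : ℤ → ℝ}
    (hgh : ∀ m : ℤ, 0 ≤ m → g m = h m) :
    ∀ m : ℤ, 0 ≤ m → (aeval shiftE q) g m = (aeval shiftE q) h m := by
  intro m hm
  rw [aeval_shiftE_apply, aeval_shiftE_apply]
  refine Finset.sum_congr rfl fun a _ => ?_
  rw [hgh (m + a) (by positivity)]

lemma aeval_shiftE_vanish (q : Polynomial ℝ) {g : ℤ → ℝ}
    (hg : ∀ m : ℤ, 0 ≤ m → g m = 0) :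
    ∀ m : ℤ, 0 ≤ m → (aeval shiftE q) g m = 0 := by
  intro m hm
  rw [aeval_shiftE_apply]
  refine Finset.sum_eq_zero fun a _ => ?_
  rw [hg (m + a) (by positivity), mul_zero]

lemma aeval_shiftE_lower (k : ℕ) (β : ℕ → ℝ) (g : ℤ → ℝ) (m : ℤ) :
    (aeval shiftE (∑ ℓ ∈ Finset.Icc 1 k, C (β ℓ) * X ^ (k - ℓ))) g m
      = ∑ ℓ ∈ Finset.Icc 1 k, β ℓ * g (m + ((k - ℓ : ℕ) : ℤ)) := by
  simp [map_sum, aeval_C, Module.End.mul_apply, LinearMap.sum_apply,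
    Module.algebraMap_end_apply, shiftE_pow, Finset.sum_apply]

lemma aeval_shiftE_charpoly (k : ℕ) (β : ℕ → ℝ) (g : ℤ → ℝ) (m : ℤ) :
    (aeval shiftE (X ^ k - ∑ ℓ ∈ Finset.Icc 1 k, C (β ℓ) * X ^ (k - ℓ))) g m
      = g (m + k) - ∑ ℓ ∈ Finset.Icc 1 k, β ℓ * g (m + ((k - ℓ : ℕ) : ℤ)) := by
  rw [map_sub, LinearMap.sub_apply, Pi.sub_apply, aeval_shiftE_lower, map_pow, aeval_X,
    shiftE_pow]



open Polynomial in
/-- If `f` satisfies a homogeneous linear recurrence of order `k` with twice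
differentiable coefficients and twice differentiable initial values, then every
`f n` is twice differentiable, and the sequence of second derivatives satisfies
the homogeneous linear recurrence of order `3k` whose characteristic polynomial
is `p³`, the cube of the characteristic polynomial of the original recurrence. -/
theorem second_deriv_seq_satisfies_recurrence_char_poly_cube
    (k : ℕ) (hk : 1 ≤ k) (α : ℕ → ℝ → ℝ)
    (hα : ∀ ℓ ∈ Finset.Icc 1 k, Differentiable ℝ (α ℓ) ∧ Differentiable ℝ (deriv (α ℓ)))
    (f : ℕ → ℝ → ℝ)
    (hinit : ∀ i < k, Differentiable ℝ (f i) ∧ Differentiable ℝ (deriv (f i)))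
    (hrec : ∀ n, k ≤ n → ∀ x : ℝ, f n x = ∑ ℓ ∈ Finset.Icc 1 k, α ℓ x * f (n - ℓ) x)
    (p : ℝ → Polynomial ℝ)
    (hp : ∀ x : ℝ, p x = X ^ k - ∑ ℓ ∈ Finset.Icc 1 k, C (α ℓ x) * X ^ (k - ℓ)) :
    (∀ n, Differentiable ℝ (f n) ∧ Differentiable ℝ (deriv (f n))) ∧
    (∀ n, 3 * k ≤ n → ∀ x : ℝ,
      ∑ i ∈ Finset.range (3 * k + 1),
        ((p x) ^ 3).coeff (3 * k - i) * deriv (deriv (f (n - i))) x = 0) := by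
  -- Step A: twice differentiability of every `f n`, with derivative formulas.
  have key : ∀ n, Differentiable ℝ (f n) ∧ Differentiable ℝ (deriv (f n)) := by
    intro n
    induction n using Nat.strong_induction_on with
    | _ n ih =>
      by_cases hn : n < k
      · exact hinit n hn
      · push_neg at hn
        have hfn : f n = fun x => ∑ ℓ ∈ Finset.Icc 1 k, α ℓ x * f (n - ℓ) x :=
          funext (hrec n hn)
        have hsub : ∀ ℓ ∈ Finset.Icc 1 k,
            Differentiable ℝ (f (n - ℓ)) ∧ Differentiable ℝ (deriv (f (n - ℓ))) := by
          intro ℓ hℓ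
          simp only [Finset.mem_Icc] at hℓ
          exact ih _ (by omega)
        have hdiff : Differentiable ℝ (f n) := by
          rw [hfn]
          exact Differentiable.fun_sum fun ℓ hℓ => (hα ℓ hℓ).1.mul (hsub ℓ hℓ).1
        refine ⟨hdiff, ?_⟩
        have hd1 : deriv (f n) = fun x => ∑ ℓ ∈ Finset.Icc 1 k,
            (deriv (α ℓ) x * f (n - ℓ) x + α ℓ x * deriv (f (n - ℓ)) x) := by
          funext x
          rw [hfn, deriv_fun_sum (A := fun ℓ y => α ℓ y * f (n - ℓ) y) fun ℓ hℓ => ((hα ℓ hℓ).1.mul (hsub ℓ hℓ).1).differentiableAt]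
          exact Finset.sum_congr rfl fun ℓ hℓ =>
            deriv_fun_mul ((hα ℓ hℓ).1.differentiableAt) ((hsub ℓ hℓ).1.differentiableAt)
        rw [hd1]
        exact Differentiable.fun_sum fun ℓ hℓ =>
          (((hα ℓ hℓ).2.mul (hsub ℓ hℓ).1).add ((hα ℓ hℓ).1.mul (hsub ℓ hℓ).2))
  refine ⟨key, ?_⟩
  -- derivative formulas
  have d1 : ∀ n, k ≤ n → ∀ x, deriv (f n) x = ∑ ℓ ∈ Finset.Icc 1 k,
      (deriv (α ℓ) x * f (n - ℓ) x + α ℓ x * deriv (f (n - ℓ)) x) := by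
    intro n hn x
    have hfn : f n = fun x => ∑ ℓ ∈ Finset.Icc 1 k, α ℓ x * f (n - ℓ) x :=
      funext (hrec n hn)
    rw [hfn, deriv_fun_sum (A := fun ℓ y => α ℓ y * f (n - ℓ) y) fun ℓ hℓ => ((hα ℓ hℓ).1.mul (key (n - ℓ)).1).differentiableAt]
    exact Finset.sum_congr rfl fun ℓ hℓ =>
      deriv_fun_mul ((hα ℓ hℓ).1.differentiableAt) ((key (n - ℓ)).1.differentiableAt)
  have d2 : ∀ n, k ≤ n → ∀ x, deriv (deriv (f n)) x = ∑ ℓ ∈ Finset.Icc 1 k,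
      (deriv (deriv (α ℓ)) x * f (n - ℓ) x + 2 * deriv (α ℓ) x * deriv (f (n - ℓ)) x
        + α ℓ x * deriv (deriv (f (n - ℓ))) x) := by
    intro n hn x
    have hfn : deriv (f n) = fun x => ∑ ℓ ∈ Finset.Icc 1 k,
        (deriv (α ℓ) x * f (n - ℓ) x + α ℓ x * deriv (f (n - ℓ)) x) :=
      funext (d1 n hn)
    rw [hfn, deriv_fun_sum (A := fun ℓ y => deriv (α ℓ) y * f (n - ℓ) y + α ℓ y * deriv (f (n - ℓ)) y) fun ℓ hℓ =>
      (((hα ℓ hℓ).2.mul (key (n - ℓ)).1).add ((hα ℓ hℓ).1.mul (key (n - ℓ)).2)).differentiableAt]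
    refine Finset.sum_congr rfl fun ℓ hℓ => ?_
    rw [deriv_fun_add (f := fun y => deriv (α ℓ) y * f (n - ℓ) y) (g := fun y => α ℓ y * deriv (f (n - ℓ)) y) (((hα ℓ hℓ).2.mul (key (n - ℓ)).1).differentiableAt)
        (((hα ℓ hℓ).1.mul (key (n - ℓ)).2).differentiableAt),
      deriv_fun_mul ((hα ℓ hℓ).2.differentiableAt) ((key (n - ℓ)).1.differentiableAt),
      deriv_fun_mul ((hα ℓ hℓ).1.differentiableAt) ((key (n - ℓ)).2.differentiableAt)]
    ring
  -- Step B: the recurrence for second derivatives.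
  intro n hn x
  have hdegP : (p x).natDegree ≤ k := by
    rw [hp x]
    refine (Polynomial.natDegree_sub_le _ _).trans (max_le (by simp) ?_)
    refine Polynomial.natDegree_sum_le_of_forall_le _ _ fun ℓ hℓ => ?_
    exact (Polynomial.natDegree_C_mul_le _ _).trans (by simp)
  have hdegP3 : ((p x) ^ 3).natDegree ≤ 3 * k :=
    Polynomial.natDegree_pow_le.trans (by omega)
  set F0 : ℤ → ℝ := fun m => f m.toNat x with hF0
  set F1 : ℤ → ℝ := fun m => deriv (f m.toNat) x with hF1
  set F2 : ℤ → ℝ := fun m => deriv (deriv (f m.toNat)) x with hF2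
  set Qx : Polynomial ℝ := ∑ ℓ ∈ Finset.Icc 1 k, C (deriv (α ℓ) x) * X ^ (k - ℓ) with hQx
  set Rx : Polynomial ℝ := ∑ ℓ ∈ Finset.Icc 1 k, C (deriv (deriv (α ℓ)) x) * X ^ (k - ℓ)
    with hRx
  have fact1 : ∀ m : ℤ, 0 ≤ m → (aeval shiftE (p x)) F0 m = 0 := by
    intro m hm
    rw [hp x, aeval_shiftE_charpoly, sub_eq_zero, hF0]
    show f ((m + (k : ℤ)).toNat) x = _
    rw [show ((m + (k : ℤ)).toNat) = m.toNat + k by omega, hrec (m.toNat + k) (by omega) x]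
    refine Finset.sum_congr rfl fun ℓ hℓ => ?_
    simp only [Finset.mem_Icc] at hℓ
    show _ = α ℓ x * f ((m + ((k - ℓ : ℕ) : ℤ)).toNat) x
    rw [show ((m + ((k - ℓ : ℕ) : ℤ)).toNat) = m.toNat + k - ℓ by omega]
  have fact2 : ∀ m : ℤ, 0 ≤ m →
      (aeval shiftE (p x)) F1 m = (aeval shiftE Qx) F0 m := by
    intro m hm
    rw [hp x, aeval_shiftE_charpoly, hQx, aeval_shiftE_lower, sub_eq_iff_eq_add, hF0, hF1]
    show deriv (f ((m + (k : ℤ)).toNat)) x = _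
    rw [show ((m + (k : ℤ)).toNat) = m.toNat + k by omega, d1 (m.toNat + k) (by omega) x,
      Finset.sum_add_distrib]
    congr 1
    · refine Finset.sum_congr rfl fun ℓ hℓ => ?_
      simp only [Finset.mem_Icc] at hℓ
      show _ = deriv (α ℓ) x * f ((m + ((k - ℓ : ℕ) : ℤ)).toNat) x
      rw [show ((m + ((k - ℓ : ℕ) : ℤ)).toNat) = m.toNat + k - ℓ by omega]
    · refine Finset.sum_congr rfl fun ℓ hℓ => ?_
      simp only [Finset.mem_Icc] at hℓ
      show _ = α ℓ x * deriv (f ((m + ((k - ℓ : ℕ) : ℤ)).toNat)) x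
      rw [show ((m + ((k - ℓ : ℕ) : ℤ)).toNat) = m.toNat + k - ℓ by omega]
  have fact3 : ∀ m : ℤ, 0 ≤ m →
      (aeval shiftE (p x)) F2 m
        = 2 * (aeval shiftE Qx) F1 m + (aeval shiftE Rx) F0 m := by
    intro m hm
    rw [hp x, aeval_shiftE_charpoly, hQx, hRx, aeval_shiftE_lower, aeval_shiftE_lower,
      sub_eq_iff_eq_add, hF0, hF1, hF2, Finset.mul_sum]
    show deriv (deriv (f ((m + (k : ℤ)).toNat))) x = _
    rw [show ((m + (k : ℤ)).toNat) = m.toNat + k by omega, d2 (m.toNat + k) (by omega) x]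
    rw [show (∑ ℓ ∈ Finset.Icc 1 k,
        (deriv (deriv (α ℓ)) x * f (m.toNat + k - ℓ) x
          + 2 * deriv (α ℓ) x * deriv (f (m.toNat + k - ℓ)) x
          + α ℓ x * deriv (deriv (f (m.toNat + k - ℓ))) x))
        = ((∑ ℓ ∈ Finset.Icc 1 k, 2 * (deriv (α ℓ) x * deriv (f (m.toNat + k - ℓ)) x))
          + (∑ ℓ ∈ Finset.Icc 1 k, deriv (deriv (α ℓ)) x * f (m.toNat + k - ℓ) x))
          + (∑ ℓ ∈ Finset.Icc 1 k, α ℓ x * deriv (deriv (f (m.toNat + k - ℓ))) x) by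
      rw [← Finset.sum_add_distrib, ← Finset.sum_add_distrib]
      exact Finset.sum_congr rfl fun ℓ hℓ => by ring]
    congr 1
    congr 1
    · refine Finset.sum_congr rfl fun ℓ hℓ => ?_
      simp only [Finset.mem_Icc] at hℓ
      show _ = 2 * (deriv (α ℓ) x * deriv (f ((m + ((k - ℓ : ℕ) : ℤ)).toNat)) x)
      rw [show ((m + ((k - ℓ : ℕ) : ℤ)).toNat) = m.toNat + k - ℓ by omega]
    · refine Finset.sum_congr rfl fun ℓ hℓ => ?_
      simp only [Finset.mem_Icc] at hℓ
      show _ = deriv (deriv (α ℓ)) x * f ((m + ((k - ℓ : ℕ) : ℤ)).toNat) x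
      rw [show ((m + ((k - ℓ : ℕ) : ℤ)).toNat) = m.toNat + k - ℓ by omega]
    · refine Finset.sum_congr rfl fun ℓ hℓ => ?_
      simp only [Finset.mem_Icc] at hℓ
      show _ = α ℓ x * deriv (deriv (f ((m + ((k - ℓ : ℕ) : ℤ)).toNat))) x
      rw [show ((m + ((k - ℓ : ℕ) : ℤ)).toNat) = m.toNat + k - ℓ by omega]
  -- the main algebraic chain
  have t0 : ∀ q : Polynomial ℝ, ∀ m : ℤ, 0 ≤ m →
      (aeval shiftE (q * p x)) F0 m = 0 := by
    intro q m hm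
    rw [map_mul, Module.End.mul_apply]
    exact aeval_shiftE_vanish q fact1 m hm
  have t1 : ∀ q : Polynomial ℝ, ∀ m : ℤ, 0 ≤ m →
      (aeval shiftE (q * p x)) F1 m = (aeval shiftE (q * Qx)) F0 m := by
    intro q m hm
    rw [map_mul, map_mul, Module.End.mul_apply, Module.End.mul_apply]
    exact aeval_shiftE_agree q fact2 m hm
  have t2 : ∀ m : ℤ, 0 ≤ m → (aeval shiftE ((p x) ^ 3)) F2 m = 0 := by
    intro m hm
    have e1 : (p x) ^ 3 = (p x) ^ 2 * (p x) := by ring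
    rw [e1, map_mul, Module.End.mul_apply]
    have hh : (aeval shiftE ((p x) ^ 2)) (aeval shiftE (p x) F2) m
        = (aeval shiftE ((p x) ^ 2))
            ((2 : ℝ) • (aeval shiftE Qx F1) + (aeval shiftE Rx F0)) m := by
      refine aeval_shiftE_agree _ (fun m' hm' => ?_) m hm
      rw [fact3 m' hm']
      simp [smul_eq_mul]
    rw [hh, map_add, map_smul]
    have e2 : (aeval shiftE ((p x) ^ 2)) (aeval shiftE Qx F1) m
        = (aeval shiftE ((p x) ^ 2 * Qx)) F1 m := by
      rw [map_mul, Module.End.mul_apply]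
    have e3 : (aeval shiftE ((p x) ^ 2)) (aeval shiftE Rx F0) m
        = (aeval shiftE ((p x) ^ 2 * Rx)) F0 m := by
      rw [map_mul, Module.End.mul_apply]
    simp only [Pi.add_apply, Pi.smul_apply, smul_eq_mul]
    rw [e2, e3]
    have e4 : (aeval shiftE ((p x) ^ 2 * Qx)) F1 m = 0 := by
      have e5 : (p x) ^ 2 * Qx = (p x * Qx) * p x := by ring
      rw [e5, t1 (p x * Qx) m hm]
      have e6 : (p x * Qx) * Qx = (Qx * Qx) * p x := by ring
      rw [e6]
      exact t0 (Qx * Qx) m hm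
    have e7 : (aeval shiftE ((p x) ^ 2 * Rx)) F0 m = 0 := by
      have e8 : (p x) ^ 2 * Rx = (Rx * p x) * p x := by ring
      rw [e8]
      exact t0 (Rx * p x) m hm
    rw [e4, e7]
    ring
  -- translate back to the stated sum
  have hmain := t2 ((n : ℤ) - 3 * k) (by omega)
  rw [aeval_shiftE_apply' _ hdegP3] at hmain
  rw [← Finset.sum_range_reflect]
  rw [← hmain]
  refine Finset.sum_congr rfl fun j hj => ?_
  simp only [Finset.mem_range] at hj
  rw [show 3 * k + 1 - 1 - j = 3 * k - j by omega, show 3 * k - (3 * k - j) = j by omega]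
  congr 1
  show deriv (deriv (f (n - (3 * k - j)))) x
      = deriv (deriv (f (((n : ℤ) - 3 * k + (j : ℤ)).toNat))) x
  rw [show (((n : ℤ) - 3 * k + (j : ℤ)).toNat) = n - (3 * k - j) by omega]
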